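/- arXiv:1210.8168 — 2 statements merged into one kernel-verified Lean document; each statement's English description precedes it below -/
import Mathlib

section
/- Counterexample non-Lebesgue point: With z as in the previous statement, for every n: (1/|B_{3r_n}(0)|) ∫_{B_{3r_n}(0)} z·e_d dx ≤ 1 − 6^{−d}. Moreover, given δ ∈ (0, 6^{−d}), if the sequence (r_n) decreases fast enough that Σ_{i>n} |B_{r_i}| ≤ δ |B_{r_n}| for all n, then (1/|B_{r_n}(0)|) ∫_{B_{r_n}(0)} z·e_d dx ≥ 1 − δ for all n. Consequently 0 is not a Lebesgue point of z. -/
/-! The bump `B_n = ball (2 r_n e) r_n` lies in `ball 0 (3 r_n)`, fills a `3^(-N)` fraction of its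
volume (`N` the dimension), and carries `⟪z, e⟫ = |x - 2 r_n e| < r_n ≤ 1/2`; this pulls the
average of `⟪z, e⟫` over `ball 0 (3 r_n)` down to at most `1 - 6^(-N)`. The bumps `B_k` with
`k ≤ n` miss `ball 0 (r_n)`, so there `⟪z, e⟫ = 1` except on the bumps with `k > n`, whose total
volume is at most `δ |ball 0 (r_n)|`. If `0` were a Lebesgue point of `z` with value `L`, both
averages would tend to `⟪L, e⟫`, which is impossible as `1 - δ > 1 - 6^(-N)`. -/

open MeasureTheory Metric Filter Set Topology

section SetIntegral

variable {α : Type*} [MeasurableSpace α] {μ : Measure α} {f : α → ℝ} {s t : Set α}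

theorem setIntegral_le_measureReal_sub (hs : MeasurableSet s) (hμs : μ s ≠ ⊤)
    (ht : MeasurableSet t) (hts : t ⊆ s) (hf : IntegrableOn f s μ) (hf_le_one : ∀ x ∈ s, f x ≤ 1)
    {a : ℝ} (hf_le : ∀ x ∈ t, f x ≤ a) :
    ∫ x in s, f x ∂μ ≤ μ.real s - (1 - a) * μ.real t := by
  have hμt : μ t ≠ ⊤ := measure_ne_top_of_subset hts hμs
  have h_on_t : ∫ x in t, f x ∂μ ≤ a * μ.real t := by
    simpa [setIntegral_const, mul_comm] using
      setIntegral_mono_on (hf.mono_set hts) (integrableOn_const (C := a) hμt) ht hf_le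
  have h_off_t : ∫ x in s \ t, f x ∂μ ≤ μ.real (s \ t) := by
    simpa [setIntegral_const] using
      setIntegral_mono_on (hf.mono_set sdiff_subset)
        (integrableOn_const (C := (1 : ℝ)) (measure_ne_top_of_subset sdiff_subset hμs))
        (hs.diff ht) fun x hx => hf_le_one x hx.1
  rw [← integral_inter_add_sdiff ht hf, inter_eq_self_of_subset_right hts,
    measureReal_sdiff hts ht hμs] at *
  linarith

theorem measureReal_le_setIntegral (hs : MeasurableSet s) (ht : MeasurableSet t)
    (hμt : μ t ≠ ⊤) (hts : t ⊆ s) (hf : IntegrableOn f s μ) (hf_nonneg : ∀ x ∈ s, 0 ≤ f x)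
    (hf_ge : ∀ x ∈ t, 1 ≤ f x) :
    μ.real t ≤ ∫ x in s, f x ∂μ :=
  calc μ.real t ≤ ∫ x in t, f x ∂μ := by
        simpa using setIntegral_ge_of_const_le_real ht hμt hf_ge (hf.mono_set hts)
    _ ≤ ∫ x in s, f x ∂μ :=
        setIntegral_mono_set hf (ae_restrict_of_forall_mem hs hf_nonneg) (.of_forall hts)

end SetIntegral

section InnerAverage

variable {α E : Type*} [MeasurableSpace α] {μ : Measure α} {s : Set α}
  [NormedAddCommGroup E] [InnerProductSpace ℝ E] {z : α → E} {e : E}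

theorem abs_setIntegral_inner_sub_le (hz : IntegrableOn z s μ) (hμs : μ s ≠ ⊤) (he : ‖e‖ ≤ 1)
    (L : E) :
    |∫ x in s, inner ℝ (z x) e ∂μ - μ.real s * inner ℝ L e| ≤ ∫ x in s, ‖z x - L‖ ∂μ := by
  have hzL : IntegrableOn (fun x => z x - L) s μ := hz.sub (integrableOn_const hμs)
  have h_sub : ∫ x in s, inner ℝ (z x) e ∂μ - μ.real s * inner ℝ L e =
      ∫ x in s, inner ℝ (z x - L) e ∂μ := by
    simp only [inner_sub_left]
    rw [integral_sub (hz.inner_const (𝕜 := ℝ) e) (integrableOn_const (C := inner ℝ L e) hμs),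
      setIntegral_const, smul_eq_mul]
  rw [h_sub]
  refine abs_integral_le_integral_abs.trans <|
    setIntegral_mono (hzL.inner_const (𝕜 := ℝ) e).abs hzL.norm fun x => ?_
  calc |inner ℝ (z x - L) e| ≤ ‖z x - L‖ * ‖e‖ := abs_real_inner_le_norm _ _
    _ ≤ ‖z x - L‖ := mul_le_of_le_one_right (norm_nonneg _) he

variable {ι : Type*} {l : Filter ι} [l.NeBot] {S : ι → Set α} {L : E} {c : ℝ}

theorem inner_le_of_tendsto_setAverage_norm_sub (hz : ∀ i, IntegrableOn z (S i) μ)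
    (hμS : ∀ i, μ (S i) ≠ ⊤) (hS : ∀ i, 0 < μ.real (S i)) (he : ‖e‖ ≤ 1)
    (hc : ∀ i, ∫ x in S i, inner ℝ (z x) e ∂μ ≤ c * μ.real (S i))
    (hL : Tendsto (fun i => ⨍ x in S i, ‖z x - L‖ ∂μ) l (𝓝 0)) :
    inner ℝ L e ≤ c := by
  refine ge_of_tendsto' (by simpa using hL.const_add c) fun i => ?_
  have := (abs_le.1 (abs_setIntegral_inner_sub_le (hz i) (hμS i) he L)).1
  rw [setAverage_eq, smul_eq_mul, ← sub_le_iff_le_add', le_inv_mul_iff₀ (hS i)]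
  linarith [hc i]

theorem le_inner_of_tendsto_setAverage_norm_sub (hz : ∀ i, IntegrableOn z (S i) μ)
    (hμS : ∀ i, μ (S i) ≠ ⊤) (hS : ∀ i, 0 < μ.real (S i)) (he : ‖e‖ ≤ 1)
    (hc : ∀ i, c * μ.real (S i) ≤ ∫ x in S i, inner ℝ (z x) e ∂μ)
    (hL : Tendsto (fun i => ⨍ x in S i, ‖z x - L‖ ∂μ) l (𝓝 0)) :
    c ≤ inner ℝ L e := by
  refine le_of_tendsto' (by simpa using hL.const_sub c) fun i => ?_
  have := (abs_le.1 (abs_setIntegral_inner_sub_le (hz i) (hμS i) he L)).2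
  rw [setAverage_eq, smul_eq_mul, sub_le_comm, le_inv_mul_iff₀ (hS i)]
  linarith [hc i]

end InnerAverage

theorem tendsto_nhdsGT_zero_of_le_mul {r : ℕ → ℝ} {q : ℝ} (hr : ∀ n, 0 < r n) (hq : q < 1)
    (hrq : ∀ n, r (n + 1) ≤ q * r n) : Tendsto r atTop (𝓝[>] 0) := by
  have hq0 : 0 ≤ q := (pos_of_mul_pos_left ((hr 1).trans_le (hrq 0)) (hr 0).le).le
  refine tendsto_nhdsWithin_iff.2 ⟨squeeze_zero (fun n => (hr n).le)
    (fun n => le_geom hq0 n fun k _ => hrq k) ?_, .of_forall hr⟩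
  simpa using (tendsto_pow_atTop_nhds_zero_of_lt_one hq0 hq).mul_const (r 0)

section ConeBumps

variable {E : Type*} [NormedAddCommGroup E] [InnerProductSpace ℝ E] {e : E}

theorem notMem_ball_smul_of_mem_ball_zero (he : ‖e‖ = 1) {ρ R : ℝ} {x : E} (hρR : ρ ≤ R)
    (hx : x ∈ ball 0 ρ) : x ∉ ball ((2 * R) • e) R := by
  have hR : 0 ≤ R := (mem_ball_zero_iff.1 hx |>.trans_le hρR |> (norm_nonneg x).trans_lt).le
  refine (ball_disjoint_ball ?_).notMem_of_mem_left hx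
  rw [dist_zero_left, norm_smul, he, mul_one, Real.norm_of_nonneg (by positivity)]
  linarith

theorem inner_smul_self_of_norm_eq_one (he : ‖e‖ = 1) (t : ℝ) : inner ℝ (t • e) e = t := by
  rw [real_inner_smul_left, real_inner_self_eq_norm_sq, he, one_pow, mul_one]

theorem notMem_iUnion_ball_of_mem_ball_zero {r : ℕ → ℝ} (he : ‖e‖ = 1) (hr : Antitone r)
    {n : ℕ} {x : E} (hx : x ∈ ball 0 (r n))
    (hx_tail : x ∉ ⋃ i, ball ((2 * r (n + 1 + i)) • e) (r (n + 1 + i))) :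
    x ∉ ⋃ k, ball ((2 * r k) • e) (r k) := by
  simp only [mem_iUnion, not_exists] at hx_tail ⊢
  intro k
  rcases le_or_gt k n with hkn | hnk
  · exact notMem_ball_smul_of_mem_ball_zero he (hr hkn) hx
  · obtain ⟨i, rfl⟩ := Nat.exists_eq_add_of_lt hnk
    simpa only [add_right_comm n i 1] using hx_tail i

structure IsConeBumps (r : ℕ → ℝ) (e : E) (z : E → E) : Prop where
  eq_of_notMem : ∀ x, x ∉ ⋃ n, ball ((2 * r n) • e) (r n) → z x = e
  eq_of_mem : ∀ n, ∀ x ∈ ball ((2 * r n) • e) (r n), z x = ‖x - (2 * r n) • e‖ • e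

namespace IsConeBumps

variable {r : ℕ → ℝ} {z : E → E}

theorem exists_mem_Icc_smul (hz : IsConeBumps r e z) (hr : ∀ n, r n ≤ 1) (x : E) :
    ∃ t ∈ Icc (0 : ℝ) 1, z x = t • e := by
  by_cases hx : x ∈ ⋃ n, ball ((2 * r n) • e) (r n)
  · obtain ⟨n, hn⟩ := mem_iUnion.1 hx
    exact ⟨_, ⟨norm_nonneg _, ((mem_ball_iff_norm.1 hn).trans_le (hr n)).le⟩, hz.eq_of_mem n x hn⟩
  · exact ⟨1, right_mem_Icc.2 zero_le_one, by rw [one_smul, hz.eq_of_notMem x hx]⟩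

theorem norm_le_one (hz : IsConeBumps r e z) (he : ‖e‖ = 1) (hr : ∀ n, r n ≤ 1) (x : E) :
    ‖z x‖ ≤ 1 := by
  obtain ⟨t, ht, hzx⟩ := hz.exists_mem_Icc_smul hr x
  rw [hzx, norm_smul, he, mul_one, Real.norm_of_nonneg ht.1]
  exact ht.2

theorem inner_mem_Icc (hz : IsConeBumps r e z) (he : ‖e‖ = 1) (hr : ∀ n, r n ≤ 1) (x : E) :
    inner ℝ (z x) e ∈ Icc (0 : ℝ) 1 := by
  obtain ⟨t, ht, hzx⟩ := hz.exists_mem_Icc_smul hr x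
  rwa [hzx, inner_smul_self_of_norm_eq_one he]

theorem inner_eq_norm_sub (hz : IsConeBumps r e z) (he : ‖e‖ = 1) {n : ℕ} {x : E}
    (hx : x ∈ ball ((2 * r n) • e) (r n)) : inner ℝ (z x) e = ‖x - (2 * r n) • e‖ := by
  rw [hz.eq_of_mem n x hx, inner_smul_self_of_norm_eq_one he]

theorem inner_eq_one (hz : IsConeBumps r e z) (he : ‖e‖ = 1) {x : E}
    (hx : x ∉ ⋃ n, ball ((2 * r n) • e) (r n)) : inner ℝ (z x) e = 1 := by
  rw [hz.eq_of_notMem x hx, real_inner_self_eq_norm_sq, he, one_pow]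

variable [FiniteDimensional ℝ E] [MeasurableSpace E] [BorelSpace E] (μ : Measure E)

theorem integrableOn (hz : IsConeBumps r e z) (he : ‖e‖ = 1) (hr : ∀ n, r n ≤ 1)
    (hzm : Measurable z) {s : Set E} (hμs : μ s ≠ ⊤) : IntegrableOn z s μ :=
  Measure.integrableOn_of_bounded hμs hzm.aestronglyMeasurable
    (ae_of_all _ (hz.norm_le_one he hr))

variable [μ.IsAddHaarMeasure]

theorem setIntegral_inner_ball_three_mul_le (hz : IsConeBumps r e z) (he : ‖e‖ = 1)
    (hr : ∀ n, r n ≤ 1 / 2) (hzm : Measurable z) {n : ℕ} (hrn : 0 < r n) :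
    ∫ x in ball 0 (3 * r n), inner ℝ (z x) e ∂μ ≤
      (1 - 1 / 6 ^ Module.finrank ℝ E) * μ.real (ball 0 (3 * r n)) := by
  have hr1 : ∀ m, r m ≤ 1 := fun m => (hr m).trans (by norm_num)
  set k := Module.finrank ℝ E with hk_def
  set V := μ.real (ball (0 : E) (3 * r n))
  have hk : 1 ≤ k := by
    have : Nontrivial E := nontrivial_of_ne e 0 (norm_ne_zero_iff.1 (by simp [he]))
    exact Module.finrank_pos
  have hsub : ball ((2 * r n) • e) (r n) ⊆ ball 0 (3 * r n) := ball_subset_ball' <| by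
    rw [dist_zero_right, norm_smul, he, mul_one, Real.norm_of_nonneg (by positivity)]
    linarith
  have hvol : μ.real (ball ((2 * r n) • e) (r n)) = V / 3 ^ k := by
    simp only [V, measureReal_def, Measure.addHaar_ball_mul_of_pos μ 0 (by norm_num : (0 : ℝ) < 3),
      Measure.addHaar_ball_center, ENNReal.toReal_mul, ← hk_def]
    rw [ENNReal.toReal_ofReal (by positivity)]
    field_simp
  have hdeficit : 1 / 2 ^ k ≤ 1 - r n :=
    calc (1 : ℝ) / 2 ^ k ≤ 1 / 2 ^ 1 := by gcongr; norm_num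
      _ ≤ 1 - r n := by linarith [hr n]
  have h6 : V / 6 ^ k = 1 / 2 ^ k * (V / 3 ^ k) := by
    rw [show (6 : ℝ) ^ k = 2 ^ k * 3 ^ k by rw [← mul_pow]; norm_num]
    field_simp
  calc ∫ x in ball 0 (3 * r n), inner ℝ (z x) e ∂μ ≤ V - (1 - r n) * (V / 3 ^ k) := by
        rw [← hvol]
        refine setIntegral_le_measureReal_sub measurableSet_ball measure_ball_lt_top.ne
          measurableSet_ball hsub
          ((hz.integrableOn μ he hr1 hzm measure_ball_lt_top.ne).inner_const e)
          (fun x _ => (hz.inner_mem_Icc he hr1 x).2) fun x hx => ?_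
        rw [hz.inner_eq_norm_sub he hx]
        exact (mem_ball_iff_norm.1 hx).le
    _ ≤ V - V / 6 ^ k := by
        rw [h6]
        gcongr
    _ = (1 - 1 / 6 ^ k) * V := by ring

theorem le_setIntegral_inner_ball (hz : IsConeBumps r e z) (he : ‖e‖ = 1) (hr : ∀ n, r n ≤ 1)
    (hr_anti : Antitone r) (hzm : Measurable z) {δ : ℝ} (hδ : 0 ≤ δ) {n : ℕ}
    (htail : ∑' i, μ (ball 0 (r (n + 1 + i))) ≤ ENNReal.ofReal δ * μ (ball 0 (r n))) :
    (1 - δ) * μ.real (ball 0 (r n)) ≤ ∫ x in ball 0 (r n), inner ℝ (z x) e ∂μ := by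
  set U := ⋃ i, ball ((2 * r (n + 1 + i)) • e) (r (n + 1 + i))
  have hμU : μ U ≤ ENNReal.ofReal δ * μ (ball 0 (r n)) := by
    refine (measure_iUnion_le _).trans ?_
    simpa only [Measure.addHaar_ball_center] using htail
  have hμU_ne_top : μ U ≠ ⊤ := ne_top_of_le_ne_top (by finiteness) hμU
  have hμU_real : μ.real U ≤ δ * μ.real (ball 0 (r n)) := by
    simpa [measureReal_def, ENNReal.toReal_mul, hδ] using
      ENNReal.toReal_mono (by finiteness) hμU
  calc (1 - δ) * μ.real (ball 0 (r n)) ≤ μ.real (ball 0 (r n)) - μ.real U := by linarith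
    _ ≤ μ.real (ball 0 (r n) \ U) := le_measureReal_sdiff hμU_ne_top
    _ ≤ ∫ x in ball 0 (r n), inner ℝ (z x) e ∂μ := by
        refine measureReal_le_setIntegral measurableSet_ball
          (measurableSet_ball.diff (.iUnion fun _ => measurableSet_ball))
          (measure_ne_top_of_subset sdiff_subset measure_ball_lt_top.ne)
          sdiff_subset ((hz.integrableOn μ he hr hzm measure_ball_lt_top.ne).inner_const e)
          (fun x _ => (hz.inner_mem_Icc he hr x).1) fun x hx => ?_
        rw [hz.inner_eq_one he (notMem_iUnion_ball_of_mem_ball_zero he hr_anti hx.1 hx.2)]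

end IsConeBumps

end ConeBumps

/-- Counterexample, non-Lebesgue point: with z as in the previous statement, the
average of z·e_d over B_{3r_n}(0) is at most 1 − 6^{−(d+1)}, while if the radii
decrease fast enough (Σ_{i>n}|B_{r_i}| ≤ δ|B_{r_n}|) the average over B_{r_n}(0)
is at least 1 − δ; consequently 0 is not a Lebesgue point of z. -/
theorem counterexample_not_lebesgue {d : ℕ}
    (r : ℕ → ℝ) (hrpos : ∀ n, 0 < r n) (hr4 : ∀ n, r (n + 1) < r n / 4)
    (hr0 : 3 * r 0 ≤ 1)
    (z : EuclideanSpace ℝ (Fin (d + 1)) → EuclideanSpace ℝ (Fin (d + 1)))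
    (hzmeas : Measurable z)
    (hzout : ∀ x, x ∉ (⋃ n, ball ((2 * r n) • EuclideanSpace.single (Fin.last d) (1 : ℝ)) (r n)) →
      z x = EuclideanSpace.single (Fin.last d) (1 : ℝ))
    (hzin : ∀ n, ∀ x ∈ ball ((2 * r n) • EuclideanSpace.single (Fin.last d) (1 : ℝ)) (r n),
      z x = ‖x - (2 * r n) • EuclideanSpace.single (Fin.last d) (1 : ℝ)‖ •
        EuclideanSpace.single (Fin.last d) (1 : ℝ)) :
    (∀ n, ∫ x in ball (0 : EuclideanSpace ℝ (Fin (d + 1))) (3 * r n),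
        (inner ℝ (z x) (EuclideanSpace.single (Fin.last d) (1 : ℝ)) : ℝ) ≤
      (1 - 1 / 6 ^ (d + 1)) *
        (volume (ball (0 : EuclideanSpace ℝ (Fin (d + 1))) (3 * r n))).toReal) ∧
    ∀ δ : ℝ, 0 < δ → δ < 1 / 6 ^ (d + 1) →
      (∀ n, (∑' i, volume (ball (0 : EuclideanSpace ℝ (Fin (d + 1))) (r (n + 1 + i)))) ≤
        ENNReal.ofReal δ * volume (ball (0 : EuclideanSpace ℝ (Fin (d + 1))) (r n))) →
      (∀ n, (1 - δ) *
          (volume (ball (0 : EuclideanSpace ℝ (Fin (d + 1))) (r n))).toReal ≤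
        ∫ x in ball (0 : EuclideanSpace ℝ (Fin (d + 1))) (r n),
          (inner ℝ (z x) (EuclideanSpace.single (Fin.last d) (1 : ℝ)) : ℝ)) ∧
      ¬ ∃ L : EuclideanSpace ℝ (Fin (d + 1)),
          Tendsto (fun ρ : ℝ => ⨍ x in ball (0 : EuclideanSpace ℝ (Fin (d + 1))) ρ, ‖z x - L‖)
            (nhdsWithin 0 (Set.Ioi 0)) (nhds 0) := by
  set e : EuclideanSpace ℝ (Fin (d + 1)) := EuclideanSpace.single (Fin.last d) 1
  have he : ‖e‖ = 1 := by simp [e]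
  have hz : IsConeBumps r e z := ⟨hzout, hzin⟩
  have hr_anti : StrictAnti r := strictAnti_nat_of_succ_lt fun n => by linarith [hr4 n, hrpos n]
  have hr_half : ∀ n, r n ≤ 1 / 2 := fun n => by linarith [hr_anti.antitone (Nat.zero_le n)]
  have hr1 : ∀ n, r n ≤ 1 := fun n => (hr_half n).trans (by norm_num)
  have upper : ∀ n, ∫ x in ball 0 (3 * r n), inner ℝ (z x) e ≤
      (1 - 1 / 6 ^ (d + 1)) * volume.real (ball (0 : EuclideanSpace ℝ (Fin (d + 1))) (3 * r n)) :=
    fun n => by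
      simpa only [finrank_euclideanSpace_fin] using
        hz.setIntegral_inner_ball_three_mul_le volume he hr_half hzmeas (hrpos n)
  refine ⟨upper, fun δ hδ hδ6 htail => ?_⟩
  have lower : ∀ n, (1 - δ) * volume.real (ball (0 : EuclideanSpace ℝ (Fin (d + 1))) (r n)) ≤
      ∫ x in ball 0 (r n), inner ℝ (z x) e :=
    fun n => hz.le_setIntegral_inner_ball volume he hr1 hr_anti.antitone hzmeas hδ.le (htail n)
  refine ⟨lower, fun ⟨L, hL⟩ => ?_⟩
  have hint (ρ : ℝ) : IntegrableOn z (ball 0 ρ) :=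
    hz.integrableOn volume he hr1 hzmeas measure_ball_lt_top.ne
  have hvol {ρ : ℝ} (hρ : 0 < ρ) : 0 < volume.real (ball (0 : EuclideanSpace ℝ (Fin (d + 1))) ρ) :=
    ENNReal.toReal_pos (measure_ball_pos _ _ hρ).ne' measure_ball_lt_top.ne
  have h3r : Tendsto (fun n => 3 * r n) atTop (𝓝[>] 0) :=
    tendsto_nhdsGT_zero_of_le_mul (fun n => by linarith [hrpos n]) (by norm_num : (1 / 4 : ℝ) < 1)
      fun n => by linarith [hr4 n]
  have hr : Tendsto r atTop (𝓝[>] 0) :=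
    tendsto_nhdsGT_zero_of_le_mul hrpos (by norm_num : (1 / 4 : ℝ) < 1) fun n => by linarith [hr4 n]
  have hL_upper := inner_le_of_tendsto_setAverage_norm_sub (fun n => hint (3 * r n))
    (fun _ => measure_ball_lt_top.ne) (fun n => hvol (by linarith [hrpos n])) he.le upper
    (hL.comp h3r)
  have hL_lower := le_inner_of_tendsto_setAverage_norm_sub (fun n => hint (r n))
    (fun _ => measure_ball_lt_top.ne) (fun n => hvol (hrpos n)) he.le lower (hL.comp hr)
  linarith
end

section
/- Sequences of sets with uniform density estimates converge in the local Hausdorff sense: let (E_n) be measurable subsets of ℝ^d such that for some γ > 0, ρ₀ > 0 and all n, every ball B_ρ(x) with ρ ≤ ρ₀ satisfies: |B_ρ(x) ∩ E_n| < γ|B_ρ(x)| implies |B_{ρ/2}(x) ∩ E_n| = 0, and symmetrically for the complement. If χ_{E_n} → χ_E in L¹_loc, then (after modifying E_n and E on null sets so that E_n^{(1)} and E^{(1)} are open) the sets E_n converge to E locally in the Hausdorff distance. -/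
/-!
Almost every point of a set is a density point of it (Besicovitch), so a ball carrying positive
measure of `A` meets `A⁽¹⁾`, while a ball centred at a point of `A⁽¹⁾` carries positive measure of
`A`. If `x ∈ Eₙ⁽¹⁾` stayed away from `E⁽¹⁾`, the lower density estimate would give
`|B_ρ(x) ∩ Eₙ| ≥ γ|B_ρ|` while `|B_ρ(x) ∩ E| = 0`, so `|Eₙ Δ E|` near `K` could not tend to zero.
Conversely, `E⁽¹⁾ ∩ K` is covered by finitely many balls carrying positive measure of `E`; once
`|Eₙ Δ E|` near `K` is below all these measures, each of these balls meets `Eₙ⁽¹⁾`.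
-/

open MeasureTheory Metric Filter Set Topology

/-- The set of points of Lebesgue density 1 of a set A ⊆ ℝ^d. -/
def densityOnePoints {d : ℕ} (A : Set (EuclideanSpace ℝ (Fin d))) :
    Set (EuclideanSpace ℝ (Fin d)) :=
  {x | Tendsto (fun ρ => volume (A ∩ ball x ρ) / volume (ball x ρ))
        (nhdsWithin 0 (Set.Ioi 0)) (nhds 1)}

namespace MeasureTheory

variable {α : Type*} [MeasurableSpace α] {μ : Measure α}

theorem measure_inter_pos_of_measure_inter_symmDiff_lt {A B K S : Set α} (hS : S ⊆ K)
    (h : μ (K ∩ symmDiff A B) < μ (A ∩ S)) : 0 < μ (B ∩ S) := by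
  have hcover : A ∩ S ⊆ (K ∩ symmDiff A B) ∪ (B ∩ S) := by
    rintro y ⟨hyA, hyS⟩
    by_cases hyB : y ∈ B
    · exact Or.inr ⟨hyB, hyS⟩
    · exact Or.inl ⟨hS hyS, Or.inl ⟨hyA, hyB⟩⟩
  refine pos_iff_ne_zero.2 fun h0 => h.not_ge ?_
  calc μ (A ∩ S) ≤ μ ((K ∩ symmDiff A B) ∪ (B ∩ S)) := measure_mono hcover
    _ ≤ μ (K ∩ symmDiff A B) + μ (B ∩ S) := measure_union_le _ _
    _ = μ (K ∩ symmDiff A B) := by rw [h0, add_zero]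

theorem eventually_measure_inter_pos_of_tendsto {ι : Type*} {l : Filter ι} {A : ι → Set α}
    {B K S : Set α} (hS : S ⊆ K) (h : Tendsto (fun n => μ (K ∩ symmDiff (A n) B)) l (𝓝 0)) :
    ∀ᶠ n in l, 0 < μ (B ∩ S) → 0 < μ (A n ∩ S) := by
  rcases eq_zero_or_pos (μ (B ∩ S)) with h0 | hpos
  · exact Eventually.of_forall fun _ hpos => absurd h0 hpos.ne'
  · filter_upwards [h.eventually_lt_const hpos] with n hn _
    exact measure_inter_pos_of_measure_inter_symmDiff_lt hS (symmDiff_comm (A n) B ▸ hn)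

theorem Measure.ball_ae_eq_closedBall {E : Type*} [NormedAddCommGroup E] [NormedSpace ℝ E]
    [MeasurableSpace E] [BorelSpace E] [FiniteDimensional ℝ E] (μ : Measure E)
    [μ.IsAddHaarMeasure] (x : E) {r : ℝ} (hr : r ≠ 0) : ball x r =ᵐ[μ] closedBall x r := by
  refine ae_eq_set.2 ⟨by rw [sdiff_eq_empty.2 ball_subset_closedBall, measure_empty], ?_⟩
  rw [closedBall_sdiff_ball]
  exact Measure.addHaar_sphere_of_ne_zero μ x hr

end MeasureTheory

section DensityPoints

variable {d : ℕ} {A : Set (EuclideanSpace ℝ (Fin d))} {x : EuclideanSpace ℝ (Fin d)} {r : ℝ}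

theorem measure_diff_densityOnePoints (A : Set (EuclideanSpace ℝ (Fin d))) :
    volume (A \ densityOnePoints A) = 0 := by
  have hdens : ∀ᵐ y ∂volume.restrict A, y ∈ densityOnePoints A := by
    filter_upwards [Besicovitch.ae_tendsto_measure_inter_div volume A] with y hy
    refine hy.congr' ?_
    filter_upwards [self_mem_nhdsWithin] with ρ (hρ : 0 < ρ)
    have hball := Measure.ball_ae_eq_closedBall volume y hρ.ne'
    rw [measure_congr hball, measure_congr ((ae_eq_refl A).inter hball)]
  refine measure_mono_null ?_ (Measure.measure_inter_eq_zero_of_restrict (ae_iff.1 hdens))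
  exact fun y hy => ⟨hy.2, hy.1⟩

theorem measure_inter_ball_pos_of_mem_densityOnePoints (hx : x ∈ densityOnePoints A)
    (hr : 0 < r) : 0 < volume (A ∩ ball x r) := by
  obtain ⟨ρ, hρ, hρr⟩ :=
    ((hx.eventually (lt_mem_nhds zero_lt_one)).and (Ioo_mem_nhdsGT hr)).exists
  exact (pos_iff_ne_zero.2 (ENNReal.div_pos_iff.1 hρ).1).trans_le
    (measure_mono (inter_subset_inter_right _ (ball_subset_ball hρr.2.le)))

theorem mem_thickening_densityOnePoints_of_measure_inter_ball_pos
    (h : 0 < volume (A ∩ ball x r)) : x ∈ thickening r (densityOnePoints A) := by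
  by_contra hx
  refine h.ne' (measure_mono_null ?_ (measure_diff_densityOnePoints A))
  rintro y ⟨hyA, hyr⟩
  exact ⟨hyA, fun hy => hx (mem_thickening_iff.2 ⟨y, hy, mem_ball'.1 hyr⟩)⟩

theorem le_measure_inter_ball_of_mem_densityOnePoints {γ ρ₀ : ℝ}
    (hA : ∀ x ρ, 0 < ρ → ρ ≤ ρ₀ →
      volume (ball x ρ ∩ A) < ENNReal.ofReal γ * volume (ball x ρ) →
      volume (ball x (ρ / 2) ∩ A) = 0)
    (hx : x ∈ densityOnePoints A) (hr : 0 < r) (hrρ₀ : r ≤ ρ₀) :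
    ENNReal.ofReal γ * volume (ball x r) ≤ volume (A ∩ ball x r) := by
  by_contra! hlt
  have hnull := hA x r hr hrρ₀ (inter_comm A _ ▸ hlt)
  rw [inter_comm] at hnull
  exact (measure_inter_ball_pos_of_mem_densityOnePoints hx (half_pos hr)).ne' hnull

end DensityPoints

section HausdorffConvergence

variable {d : ℕ} {ι : Type*} {l : Filter ι} {A : ι → Set (EuclideanSpace ℝ (Fin d))}
  {B K : Set (EuclideanSpace ℝ (Fin d))} {ε : ℝ}

theorem eventually_densityOnePoints_inter_subset_thickening_of_density_estimate {γ ρ₀ : ℝ}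
    (hγ : 0 < γ) (hρ₀ : 0 < ρ₀)
    (hdens : ∀ n x ρ, 0 < ρ → ρ ≤ ρ₀ →
      volume (ball x ρ ∩ A n) < ENNReal.ofReal γ * volume (ball x ρ) →
      volume (ball x (ρ / 2) ∩ A n) = 0)
    (hL1 : ∀ K, IsCompact K → Tendsto (fun n => volume (K ∩ symmDiff (A n) B)) l (𝓝 0))
    (hK : IsCompact K) (hε : 0 < ε) :
    ∀ᶠ n in l, densityOnePoints (A n) ∩ K ⊆ thickening ε (densityOnePoints B) := by
  set ρ := min ε ρ₀
  have hρ : 0 < ρ := lt_min hε hρ₀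
  have hball : ∀ x ∈ K, ball x ρ ⊆ cthickening ε K := fun x hx =>
    (ball_subset_ball (min_le_left _ _)).trans
      ((ball_subset_thickening hx ε).trans (thickening_subset_cthickening ε K))
  have hc : 0 < ENNReal.ofReal γ * volume (ball (0 : EuclideanSpace ℝ (Fin d)) ρ) :=
    ENNReal.mul_pos (ENNReal.ofReal_pos.2 hγ).ne' (measure_ball_pos volume _ hρ).ne'
  filter_upwards [(hL1 _ hK.cthickening).eventually_lt_const hc] with n hn x ⟨hx, hxK⟩
  refine thickening_mono (min_le_left ε ρ₀) _
    (mem_thickening_densityOnePoints_of_measure_inter_ball_pos ?_)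
  refine measure_inter_pos_of_measure_inter_symmDiff_lt (hball x hxK) (hn.trans_le ?_)
  rw [← Measure.addHaar_ball_center volume x]
  exact le_measure_inter_ball_of_mem_densityOnePoints (hdens n) hx hρ (min_le_right _ _)

theorem eventually_densityOnePoints_inter_subset_thickening_of_tendsto
    (hL1 : ∀ K, IsCompact K → Tendsto (fun n => volume (K ∩ symmDiff (A n) B)) l (𝓝 0))
    (hK : IsCompact K) (hε : 0 < ε) :
    ∀ᶠ n in l, densityOnePoints B ∩ K ⊆ thickening ε (densityOnePoints (A n)) := by
  obtain ⟨t, htK, htfin, hKt⟩ := hK.finite_cover_balls (by positivity : 0 < ε / 4)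
  have hball : ∀ i ∈ t, ball i (ε / 2) ⊆ cthickening (ε / 2) K := fun i hi =>
    (ball_subset_thickening (htK hi) _).trans (thickening_subset_cthickening _ K)
  have hpos : ∀ᶠ n in l, ∀ i ∈ t,
      0 < volume (B ∩ ball i (ε / 2)) → 0 < volume (A n ∩ ball i (ε / 2)) :=
    (eventually_all_finite htfin).2 fun i hi =>
      eventually_measure_inter_pos_of_tendsto (hball i hi) (hL1 _ hK.cthickening)
  filter_upwards [hpos] with n hn x ⟨hx, hxK⟩
  obtain ⟨i, hi, hxi⟩ : ∃ i ∈ t, x ∈ ball i (ε / 4) := by simpa using hKt hxK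
  have hxi : dist x i < ε / 4 := hxi
  have hBi : 0 < volume (B ∩ ball i (ε / 2)) :=
    (measure_inter_ball_pos_of_mem_densityOnePoints hx (by positivity : 0 < ε / 4)).trans_le
      (measure_mono (inter_subset_inter_right _ (ball_subset_ball' (by linarith))))
  obtain ⟨y, hy, hiy⟩ := mem_thickening_iff.1
    (mem_thickening_densityOnePoints_of_measure_inter_ball_pos (hn i hi hBi))
  exact mem_thickening_iff.2 ⟨y, hy, by linarith [dist_triangle x i y]⟩

end HausdorffConvergence

theorem hausdorff_convergence_from_density_general {d : ℕ}
    (Eseq : ℕ → Set (EuclideanSpace ℝ (Fin d))) (E : Set (EuclideanSpace ℝ (Fin d)))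
    (γ ρ₀ : ℝ) (hγ : 0 < γ) (hρ₀ : 0 < ρ₀)
    (hdens : ∀ n x ρ, 0 < ρ → ρ ≤ ρ₀ →
      volume (ball x ρ ∩ Eseq n) < ENNReal.ofReal γ * volume (ball x ρ) →
      volume (ball x (ρ / 2) ∩ Eseq n) = 0)
    (hL1 : ∀ K : Set (EuclideanSpace ℝ (Fin d)), IsCompact K →
      Tendsto (fun n => volume (K ∩ (symmDiff (Eseq n) E))) atTop (nhds 0)) :
    ∀ K : Set (EuclideanSpace ℝ (Fin d)), IsCompact K → ∀ ε : ℝ, 0 < ε →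
      ∀ᶠ n in atTop,
        densityOnePoints (Eseq n) ∩ K ⊆ Metric.thickening ε (densityOnePoints E) ∧
        densityOnePoints E ∩ K ⊆ Metric.thickening ε (densityOnePoints (Eseq n)) := by
  intro K hK ε hε
  exact (eventually_densityOnePoints_inter_subset_thickening_of_density_estimate hγ hρ₀ hdens
    hL1 hK hε).and (eventually_densityOnePoints_inter_subset_thickening_of_tendsto hL1 hK hε)

/-- Sets satisfying uniform density estimates which converge in L¹_loc converge
locally in the Hausdorff sense (for their density-one representatives). -/
theorem hausdorff_convergence_from_density {d : ℕ}
    (Eseq : ℕ → Set (EuclideanSpace ℝ (Fin d))) (E : Set (EuclideanSpace ℝ (Fin d)))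
    (hEseqmeas : ∀ n, MeasurableSet (Eseq n)) (hEmeas : MeasurableSet E)
    (γ ρ₀ : ℝ) (hγ : 0 < γ) (hρ₀ : 0 < ρ₀)
    (hdens : ∀ n x ρ, 0 < ρ → ρ ≤ ρ₀ →
      volume (ball x ρ ∩ Eseq n) < ENNReal.ofReal γ * volume (ball x ρ) →
      volume (ball x (ρ / 2) ∩ Eseq n) = 0)
    (hdensc : ∀ n x ρ, 0 < ρ → ρ ≤ ρ₀ →
      volume (ball x ρ ∩ (Eseq n)ᶜ) < ENNReal.ofReal γ * volume (ball x ρ) →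
      volume (ball x (ρ / 2) ∩ (Eseq n)ᶜ) = 0)
    (hL1 : ∀ K : Set (EuclideanSpace ℝ (Fin d)), IsCompact K →
      Tendsto (fun n => volume (K ∩ (symmDiff (Eseq n) E))) atTop (nhds 0)) :
    ∀ K : Set (EuclideanSpace ℝ (Fin d)), IsCompact K → ∀ ε : ℝ, 0 < ε →
      ∀ᶠ n in atTop,
        densityOnePoints (Eseq n) ∩ K ⊆ Metric.thickening ε (densityOnePoints E) ∧
        densityOnePoints E ∩ K ⊆ Metric.thickening ε (densityOnePoints (Eseq n)) :=
  hausdorff_convergence_from_density_general Eseq E γ ρ₀ hγ hρ₀ hdens hL1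
end
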